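/- arXiv:cs/0603034 — 3 statements merged into one kernel-verified Lean document; each statement's English description precedes it below -/
import Mathlib

section
/- For propositional formulas φ and ψ, φ ∧ ψ is logically equivalent to φ ∧ ⋀ NewCons(φ, ψ), where NewCons(φ, ψ) = PI(φ ∧ ψ) \ PI(φ). -/
inductive PForm (α : Type) : Type
  | atom : α → PForm α
  | fls  : PForm α
  | not  : PForm α → PForm α
  | and  : PForm α → PForm α → PForm α
  | or   : PForm α → PForm α → PForm α

namespace PForm

def Sat {α : Type} (v : α → Prop) : PForm α → Prop
  | atom p => v p
  | fls => False
  | not φ => ¬ Sat v φ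
  | and φ ψ => Sat v φ ∧ Sat v ψ
  | or φ ψ => Sat v φ ∨ Sat v ψ

end PForm

/-- A literal is an atom together with a polarity. -/
abbrev Lit (α : Type) := α × Bool

def Lit.Sat {α : Type} (v : α → Prop) (l : Lit α) : Prop :=
  if l.2 then v l.1 else ¬ v l.1

/-- A clause is a (finite) disjunction of literals. -/
abbrev Clause (α : Type) := Finset (Lit α)

def Clause.Sat {α : Type} (v : α → Prop) (c : Clause α) : Prop :=
  ∃ l ∈ c, Lit.Sat v l

def SatAll {α : Type} (v : α → Prop) (Γ : Set (PForm α)) : Prop :=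
  ∀ φ ∈ Γ, PForm.Sat v φ

/-- `χ` is an implicate of the set of formulas `Γ`. -/
def EntailsC {α : Type} (Γ : Set (PForm α)) (c : Clause α) : Prop :=
  ∀ v : α → Prop, SatAll v Γ → Clause.Sat v c

/-- Entailment between clauses. -/
def ClEntails {α : Type} (c c' : Clause α) : Prop :=
  ∀ v : α → Prop, Clause.Sat v c → Clause.Sat v c'

/-- The set of prime implicates of (the conjunction of) `Γ`. -/
def PI {α : Type} (Γ : Set (PForm α)) : Set (Clause α) :=
  {c | EntailsC Γ c ∧ ∀ c' : Clause α, EntailsC Γ c' → ClEntails c' c → ClEntails c c'}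

/-- New consequences of `ψ` w.r.t. `Γ`:  `PI(Γ ∧ ψ) \ PI(Γ)`. -/
def NewCons {α : Type} (Γ : Set (PForm α)) (ψ : PForm α) : Set (Clause α) :=
  PI (Γ ∪ {ψ}) \ PI Γ

/-! If `v ⊨ Γ` but `v ⊭ Γ ∧ ψ`, the clause `Clause.blocking v`, satisfied by every valuation
except `v`, is an implicate of `Γ ∧ ψ`. Being non-tautological, it contains a prime implicate `c`
of `Γ ∧ ψ`, and `v ⊭ c`. But `c` is either a prime implicate of `Γ`, which `v` satisfies, or a new
consequence of `ψ`. -/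

namespace Clause

variable {α : Type}

def NonTautological (c : Clause α) : Prop :=
  ∀ a : α, ¬ ((a, true) ∈ c ∧ (a, false) ∈ c)

theorem NonTautological.mono {c c' : Clause α} (h : NonTautological c) (hc' : c' ⊆ c) :
    NonTautological c' :=
  fun a ha => h a ⟨hc' ha.1, hc' ha.2⟩

theorem sat_mono {v : α → Prop} {c c' : Clause α} (hc : c ⊆ c') (h : Clause.Sat v c) :
    Clause.Sat v c' :=
  let ⟨l, hl, hsat⟩ := h
  ⟨l, hc hl, hsat⟩

theorem clEntails_of_subset {c c' : Clause α} (h : c ⊆ c') : ClEntails c c' :=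
  fun _ => sat_mono h

theorem subset_of_clEntails {c' c : Clause α} (hc : NonTautological c) (h : ClEntails c' c) :
    c' ⊆ c := by
  rintro ⟨p, bp⟩ hl
  by_contra hlc
  -- `v` falsifies every literal of `c` and satisfies `(p, bp)`
  let v : α → Prop := fun a => (a, false) ∈ c ∨ (a = p ∧ bp = true)
  have hl_sat : Lit.Sat v (p, bp) := by
    cases bp with
    | false =>
      rintro (hf | ⟨-, hb⟩)
      · exact hlc hf
      · cases hb
    | true => exact Or.inr ⟨rfl, rfl⟩
  obtain ⟨⟨a, b⟩, hmem, hsat⟩ := h v ⟨(p, bp), hl, hl_sat⟩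
  cases b with
  | false => exact hsat (Or.inl hmem)
  | true =>
    rcases hsat with hf | ⟨rfl, rfl⟩
    · exact hc a ⟨hmem, hf⟩
    · exact hlc hmem

open Classical in
noncomputable def blocking [Fintype α] (v : α → Prop) : Clause α :=
  Finset.univ.image fun a => (a, decide ¬ v a)

variable [Fintype α]

theorem blocking_nonTautological (v : α → Prop) : NonTautological (blocking v) := by
  rintro a ⟨htrue, hfalse⟩
  simp only [blocking, Finset.mem_image, Finset.mem_univ, true_and, Prod.mk.injEq] at htrue hfalse
  obtain ⟨_, rfl, hpos⟩ := htrue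
  obtain ⟨_, rfl, hneg⟩ := hfalse
  simp_all

theorem sat_blocking_iff {v w : α → Prop} : Clause.Sat w (blocking v) ↔ w ≠ v := by
  simp only [Clause.Sat, blocking, Finset.mem_image, Finset.mem_univ, true_and,
    exists_exists_eq_and, Lit.Sat, ne_eq, funext_iff, not_forall]
  refine exists_congr fun a => ?_
  by_cases hv : v a <;> simp [hv]

end Clause

section

open Clause

variable {α : Type}

theorem entailsC_blocking_iff [Fintype α] {Γ : Set (PForm α)} {v : α → Prop} :
    EntailsC Γ (blocking v) ↔ ¬ SatAll v Γ := by
  simp only [EntailsC, sat_blocking_iff]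
  exact ⟨fun h hv => h v hv rfl, fun h w hw hwv => h (hwv ▸ hw)⟩

theorem exists_subset_mem_PI {Γ : Set (PForm α)} {C : Clause α} (hC : NonTautological C)
    (hent : EntailsC Γ C) : ∃ c ⊆ C, c ∈ PI Γ := by
  obtain ⟨c, hcC, hc_ent, hc_min⟩ := exists_minimal_le_of_wellFoundedLT (EntailsC Γ) C hent
  refine ⟨c, hcC, hc_ent, fun c' hc'_ent hc'c => clEntails_of_subset ?_⟩
  exact hc_min hc'_ent (subset_of_clEntails (hC.mono hcC) hc'c)

theorem satAll_union_singleton_iff_newCons [Fintype α] (Γ : Set (PForm α)) (ψ : PForm α)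
    (v : α → Prop) :
    SatAll v (Γ ∪ {ψ}) ↔ SatAll v Γ ∧ ∀ c ∈ NewCons Γ ψ, Clause.Sat v c := by
  refine ⟨fun hv => ⟨fun χ hχ => hv χ (Or.inl hχ), fun c hc => hc.1.1 v hv⟩, ?_⟩
  rintro ⟨hΓ, hnew⟩
  by_contra hv
  obtain ⟨c, hc_sub, hc_PI⟩ :=
    exists_subset_mem_PI (blocking_nonTautological v) (entailsC_blocking_iff.mpr hv)
  have hc_sat : Clause.Sat v c := by
    by_cases hc_old : c ∈ PI Γ
    · exact hc_old.1 v hΓ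
    · exact hnew c ⟨hc_PI, hc_old⟩
  exact sat_blocking_iff.mp (sat_mono hc_sub hc_sat) rfl

end

/-- `φ ∧ ψ` is equivalent to `φ ∧ ⋀ NewCons(φ, ψ)`. -/
theorem stmt_1 {α : Type} [Fintype α] (φ ψ : PForm α) :
    ∀ v : α → Prop,
      (PForm.Sat v φ ∧ PForm.Sat v ψ) ↔
      (PForm.Sat v φ ∧ ∀ c ∈ NewCons ({φ} : Set (PForm α)) ψ, Clause.Sat v c) := by
  intro v
  simpa [SatAll, and_comm] using satAll_union_singleton_iff_newCons {φ} ψ v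
end

section
/- Let S be a set of propositional formulas, C a formula (conjunction of effects), and F a formula (conjunction of frame literals). Then S ∪ {C} ∪ {F} is inconsistent if and only if S ∪ NewCons(S, C) ∪ {F} is inconsistent. -/
/-!
If `v ⊨ S` but `v ⊭ C`, the maxterm of `v` (the disjunction of the literals false under `v`) is an
implicate of `S ∧ C` falsified by `v`. Over finitely many atoms it is subsumed by a prime implicate
of `S ∧ C`, which `v` still falsifies; as `v ⊨ S`, that prime implicate is not an implicate of `S`,
so it is a new consequence of `C` violated by `v`.
-/

variable {α : Type}

theorem satAll_union_singleton {v : α → Prop} {Γ : Set (PForm α)} {φ : PForm α} :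
    SatAll v (Γ ∪ {φ}) ↔ SatAll v Γ ∧ PForm.Sat v φ := by
  simp [SatAll, or_imp, forall_and, and_comm]

open Classical in
noncomputable def Clause.maxterm [Fintype α] (v : α → Prop) : Clause α :=
  Finset.univ.filter fun l => ¬ Lit.Sat v l

theorem Clause.sat_maxterm_iff [Fintype α] {v w : α → Prop} :
    Clause.Sat w (Clause.maxterm v) ↔ w ≠ v := by
  classical
  constructor
  · rintro ⟨l, hl, hwl⟩ rfl
    exact (Finset.mem_filter.1 hl).2 hwl
  · intro hwv
    obtain ⟨p, hp⟩ : ∃ p, ¬ (w p ↔ v p) :=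
      not_forall.1 fun h => hwv (funext fun p => propext (h p))
    refine ⟨(p, decide (w p)), Finset.mem_filter.2 ⟨Finset.mem_univ _, ?_⟩, ?_⟩ <;>
      by_cases hw : w p <;> simp_all [Lit.Sat]

theorem exists_mem_PI_clEntails [Finite α] {Γ : Set (PForm α)} {c : Clause α}
    (hc : EntailsC Γ c) : ∃ p ∈ PI Γ, ClEntails p c := by
  -- minimise the set of models: `ClEntails` is inclusion of models
  obtain ⟨m, ⟨hm, hmc⟩, hmin⟩ := Set.Finite.exists_minimalFor
    (fun c' : Clause α => {w | Clause.Sat w c'}) {c' | EntailsC Γ c' ∧ ClEntails c' c}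
    (Set.toFinite _) ⟨c, hc, fun _ => id⟩
  exact ⟨m, ⟨hm, fun c' hc' hc'm => hmin ⟨hc', fun w hw => hmc w (hc'm w hw)⟩ hc'm⟩, hmc⟩

theorem sat_iff_forall_newCons_sat [Fintype α] {S : Set (PForm α)} {C : PForm α}
    {v : α → Prop} (hS : SatAll v S) :
    PForm.Sat v C ↔ ∀ c ∈ NewCons S C, Clause.Sat v c := by
  refine ⟨fun hC c hc => hc.1.1 v (satAll_union_singleton.2 ⟨hS, hC⟩), fun hN => ?_⟩
  by_contra hC
  have hmaxterm : EntailsC (S ∪ {C}) (Clause.maxterm v) := fun w hw =>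
    Clause.sat_maxterm_iff.2 fun hwv => hC (hwv ▸ (satAll_union_singleton.1 hw).2)
  obtain ⟨p, hp, hpv⟩ := exists_mem_PI_clEntails hmaxterm
  have hnp : ¬ Clause.Sat v p := fun h => Clause.sat_maxterm_iff.1 (hpv v h) rfl
  exact hnp (hN p ⟨hp, fun hpS => hnp (hpS.1 v hS)⟩)

/-- Lemma 1: `S ∪ {C} ∪ {F}` is inconsistent iff
`S ∪ NewCons(S, C) ∪ {F}` is inconsistent. -/
theorem stmt_3 {α : Type} [Fintype α] (S : Set (PForm α)) (C F : PForm α) :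
    (¬ ∃ v : α → Prop, SatAll v S ∧ PForm.Sat v C ∧ PForm.Sat v F) ↔
    (¬ ∃ v : α → Prop, SatAll v S ∧ (∀ c ∈ NewCons S C, Clause.Sat v c) ∧ PForm.Sat v F) := by
  refine not_congr (exists_congr fun v => ?_)
  exact ⟨fun ⟨hS, hC, hF⟩ => ⟨hS, (sat_iff_forall_newCons_sat hS).1 hC, hF⟩,
    fun ⟨hS, hN, hF⟩ => ⟨hS, (sat_iff_forall_newCons_sat hS).2 hN, hF⟩⟩
end

section
/- Let χ be a clause in NewCons(S, C) such that S ∪ {φ, φ'} ∪ {⋀_{j∈J} ¬l_j} is consistent and S ∪ {χ} ∪ {⋀_{j∈J} ¬l_j} is inconsistent, where J indexes a set of literals including the negations of all literals of χ. Then S ∪ {χ} is consistent and for every literal l occurring in χ, the negation ¬l appears among the ⋀ restricted to literals of χ; consequently S ∪ {χ} ∪ {⋀_{l∈χ} ¬l} is inconsistent and all literals of χ lie in the designated independent set. -/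
/-! A clause `χ` subsumes each clause it entails, as long as that clause is falsifiable. Here
`χ' = χ ∩ L` is falsifiable (by the valuation refuting `L`); it is entailed by `S ∪ {C}` (by the
inconsistency hypothesis, since `S ∪ {C}` entails `χ`) and it entails `χ`, so primality of `χ`
gives `χ ⊨ χ'`, whence `χ ⊆ χ' ⊆ L`. -/

theorem Lit.sat_iff {α : Type} {v : α → Prop} {l : Lit α} : Lit.Sat v l ↔ (v l.1 ↔ l.2 = true) := by
  cases h : l.2 <;> simp [Lit.Sat, h]

theorem ClEntails.of_subset {α : Type} {c c' : Clause α} (h : c ⊆ c') : ClEntails c c' :=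
  fun _ ⟨l, hl, hsat⟩ => ⟨l, h hl, hsat⟩

theorem ClEntails.subset {α : Type} {c c' : Clause α} (h : ClEntails c c')
    (hfalse : ∃ v : α → Prop, ¬ Clause.Sat v c') : c ⊆ c' := by
  classical
  obtain ⟨v, hv⟩ := hfalse
  intro l hl
  by_contra hl'
  -- flip `v` at the atom of `l` so that `l` holds; no literal of `c'` can then hold
  let w : α → Prop := fun a => if a = l.1 then l.2 = true else v a
  have hwl : Lit.Sat w l := Lit.sat_iff.mpr (by simp [w])
  obtain ⟨m, hm, hwm⟩ := h w ⟨l, hl, hwl⟩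
  by_cases hatom : m.1 = l.1
  · have hpol : m.2 ≠ l.2 := fun hpol => hl' (Prod.ext hatom.symm hpol.symm ▸ hm)
    have hwm' : l.2 = true ↔ m.2 = true := by simpa [w, hatom] using Lit.sat_iff.mp hwm
    exact hpol (Bool.eq_iff_iff.mpr hwm'.symm)
  · exact hv ⟨m, hm, Lit.sat_iff.mpr (by simpa [w, hatom] using Lit.sat_iff.mp hwm)⟩

theorem PI.subset_of_entailsC {α : Type} {Γ : Set (PForm α)} {χ χ' : Clause α} (hχ : χ ∈ PI Γ)
    (hχ' : EntailsC Γ χ') (hsub : χ' ⊆ χ) (hfalse : ∃ v : α → Prop, ¬ Clause.Sat v χ') :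
    χ ⊆ χ' :=
  (hχ.2 χ' hχ' (.of_subset hsub)).subset hfalse

theorem stmt_5_general {α : Type} (S : Set (PForm α)) (C : PForm α) (χ : Clause α)
    (L : Set (Lit α))
    (hχ : χ ∈ NewCons S C)
    (h1 : ∃ v : α → Prop, SatAll v S ∧ ∀ l ∈ L, ¬ Lit.Sat v l)
    (h2 : ¬ ∃ v : α → Prop, SatAll v S ∧ Clause.Sat v χ ∧ ∀ l ∈ χ, l ∈ L → ¬ Lit.Sat v l) :
    ∀ l ∈ χ, l ∈ L := by
  classical
  have hentails : EntailsC (S ∪ {C}) (χ.filter (· ∈ L)) := by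
    intro v hv
    by_contra hfalse
    exact h2 ⟨v, fun φ hφ => hv φ (.inl hφ), hχ.1.1 v hv,
      fun l hl hlL hsat => hfalse ⟨l, Finset.mem_filter.mpr ⟨hl, hlL⟩, hsat⟩⟩
  have hfalsifiable : ∃ v : α → Prop, ¬ Clause.Sat v (χ.filter (· ∈ L)) := by
    obtain ⟨v, -, hvL⟩ := h1
    exact ⟨v, fun ⟨l, hl, hsat⟩ => hvL l (Finset.mem_filter.mp hl).2 hsat⟩
  intro l hl
  exact (Finset.mem_filter.mp
    (PI.subset_of_entailsC hχ.1 hentails (Finset.filter_subset _ _) hfalsifiable hl)).2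

/-- key sub-claim of Lemma 5: let `χ ∈ NewCons(S, C)`; if
`S ∪ {⋀_{l∈L} ¬l}` is consistent, `S ∪ {χ} ∪ {⋀_{l∈χ∩L} ¬l}` is inconsistent,
and `S ∪ {χ}` is consistent, then every literal of `χ` belongs to `L`. -/
theorem stmt_5 {α : Type} [Fintype α] (S : Set (PForm α)) (C : PForm α) (χ : Clause α)
    (L : Set (Lit α))
    (hχ : χ ∈ NewCons S C)
    (h1 : ∃ v : α → Prop, SatAll v S ∧ ∀ l ∈ L, ¬ Lit.Sat v l)
    (h2 : ¬ ∃ v : α → Prop, SatAll v S ∧ Clause.Sat v χ ∧ ∀ l ∈ χ, l ∈ L → ¬ Lit.Sat v l)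
    (h3 : ∃ v : α → Prop, SatAll v S ∧ Clause.Sat v χ) :
    ∀ l ∈ χ, l ∈ L :=
  stmt_5_general S C χ L hχ h1 h2
end
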